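/- arXiv:1303.0214 — 4 statements merged into one kernel-verified Lean document; each statement's English description precedes it below -/
import Mathlib

section
/- Let (T, η, t₀, t₁) be a template: T is a finite nonempty type, η is a binary relation on T such that (T, η) is a directed tree, t₀ ∈ T is a leaf of the underlying tree (it has exactly one neighbour), and t₁ ∈ T. Equip T × ℕ with the edge relation relating (u, j) to (v, j) whenever η u v, let ~ be the equivalence relation on T × ℕ generated by the pairs ((t₁, j), (t₀, j+1)) for all j ∈ ℕ, and let S be the quotient (T × ℕ)/~ with the induced edge relation (the class of x is related to the class of y iff some x' ~ x is related to some y' ~ y in T × ℕ). Then S — which is a shallow star when t₀ = t₁ and a periodic path when t₀ ≠ t₁ — is unary FA-presentable. -/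
/-- The convolution word of the pair `(m, n)`, over the three-letter alphabet `Fin 3`
(`0` plays the role of `s`, `1` of `l`, `2` of `r`). -/
def convWord (m n : ℕ) : List (Fin 3) :=
  List.replicate (min m n) 0 ++ List.replicate (m - min m n) 1 ++
    List.replicate (n - min m n) 2

/-- The convolution language of a binary relation on `ℕ`. -/
def convLang (R : ℕ → ℕ → Prop) : Language (Fin 3) :=
  {w | ∃ m n, R m n ∧ w = convWord m n}

/-- A binary relation on `ℕ` is regular if its convolution language is regular. -/
def RegularRel (R : ℕ → ℕ → Prop) : Prop :=
  (convLang R).IsRegular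
/-- The unary language over a one-letter alphabet associated to a set `L ⊆ ℕ`,
identifying `a^n` with `n`. -/
def unaryLang (L : Set ℕ) : Language Unit :=
  {w | w.length ∈ L}

/-- A (countable) structure `(X, ρ)` with one binary relation is unary FA-presentable
if there are a set `L ⊆ ℕ` whose unary language is regular and a surjection
`φ : L → X` such that equality and the relation, pulled back along `φ`, are
regular relations. -/
def UnaryFAPresentable {X : Type*} (ρ : X → X → Prop) : Prop :=
  ∃ L : Set ℕ, (unaryLang L).IsRegular ∧
    ∃ φ : ℕ → X, (∀ x, ∃ n ∈ L, φ n = x) ∧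
      RegularRel (fun m n => m ∈ L ∧ n ∈ L ∧ φ m = φ n) ∧
      RegularRel (fun m n => m ∈ L ∧ n ∈ L ∧ ρ (φ m) (φ n))
/-- The underlying (simple, undirected) graph of a binary relation `η`. -/
def adjGraph {V : Type*} (η : V → V → Prop) : SimpleGraph V where
  Adj u v := u ≠ v ∧ (η u v ∨ η v u)
  symm := ⟨fun _ _ h => ⟨h.1.symm, h.2.symm⟩⟩
  loopless := ⟨fun _ h => h.1 rfl⟩

/-- `η` is a directed tree if it is irreflexive, no pair is related in both
directions, and the underlying undirected graph is a tree. -/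
def IsDirectedTree {V : Type*} (η : V → V → Prop) : Prop :=
  (∀ v, ¬ η v v) ∧ (∀ u v, ¬ (η u v ∧ η v u)) ∧ (adjGraph η).IsTree

/-- The setoid on `T × ℕ` identifying the copy of `t₁` in the `j`-th copy of the
template with the copy of `t₀` in the `(j+1)`-th copy. -/
def templateSetoid {T : Type*} (t₀ t₁ : T) : Setoid (T × ℕ) :=
  ⟨Relation.EqvGen (fun x y => ∃ j : ℕ, x = (t₁, j) ∧ y = (t₀, j + 1)),
   Relation.EqvGen.is_equivalence _⟩

/-!
Number the elements of `T` as `0, …, k - 1` and let `n` stand for the `(n % k)`-th element of the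
`(n / k)`-th copy of the template. Pulled back to `T × ℕ`, both the identification `~` and the
edge relation of the quotient only depend on the two labels and on the level gap, capped at a
small bound: in the star case all copies of `t₀` are glued together, in the path case a class
consists of at most two points on adjacent levels, and the only boundary effect at level `0`
would need an `η`-loop at `t₁`. On numbers, labels and capped level gap are functions of
`m % k`, `n % k` and the differences `m - n`, `n - m` capped at a multiple of `k`, and exactly
these data can be maintained by a finite automaton reading `conv(m, n)`.
-/

lemma convWord_succ_succ (m : ℕ) : convWord (m + 1) (m + 1) = convWord m m ++ [0] := by
  simp [convWord, List.replicate_succ']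

lemma convWord_succ_left {m n : ℕ} (h : n ≤ m) : convWord (m + 1) n = convWord m n ++ [1] := by
  simp [convWord, min_eq_right h, min_eq_right (h.trans m.le_succ), Nat.sub_add_comm h,
    List.replicate_succ']

lemma convWord_succ_right {m n : ℕ} (h : m ≤ n) : convWord m (n + 1) = convWord m n ++ [2] := by
  simp [convWord, min_eq_left h, min_eq_left (h.trans n.le_succ), Nat.sub_add_comm h,
    List.replicate_succ']

def convStep : Option (ℕ × ℕ) → Fin 3 → Option (ℕ × ℕ)
  | some (m, n), 0 => if m = n then some (m + 1, n + 1) else none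
  | some (m, n), 1 => if n ≤ m then some (m + 1, n) else none
  | some (m, n), 2 => if m ≤ n then some (m, n + 1) else none
  | none, _ => none

def convDFA (R : ℕ → ℕ → Prop) : DFA (Fin 3) (Option (ℕ × ℕ)) where
  step := convStep
  start := some (0, 0)
  accept := {s | ∃ m n, s = some (m, n) ∧ R m n}

lemma eq_convWord_of_convDFA_eval (R : ℕ → ℕ → Prop) {w : List (Fin 3)} {m n : ℕ}
    (h : (convDFA R).eval w = some (m, n)) : w = convWord m n := by
  induction w using List.reverseRecOn generalizing m n with
  | nil => cases h; rfl
  | append_singleton w a ih =>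
    rw [DFA.eval_append_singleton] at h
    rcases hw : (convDFA R).eval w with _ | ⟨m', n'⟩
    · rw [hw] at h; cases h
    rw [hw] at h
    rw [ih hw]
    fin_cases a <;> simp only [convDFA, convStep] at h <;> split_ifs at h with hle <;> cases h
    · subst hle; exact (convWord_succ_succ m').symm
    · exact (convWord_succ_left hle).symm
    · exact (convWord_succ_right hle).symm

lemma convDFA_eval_convWord (R : ℕ → ℕ → Prop) (m n : ℕ) :
    (convDFA R).eval (convWord m n) = some (m, n) := by
  induction h : m + n using Nat.strong_induction_on generalizing m n with
  | _ s ih =>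
  subst h
  rcases m with _ | m <;> rcases n with _ | n
  · rfl
  · rw [convWord_succ_right (Nat.zero_le n), DFA.eval_append_singleton,
      ih _ (by omega) 0 n rfl]
    simp [convDFA, convStep]
  · rw [convWord_succ_left (Nat.zero_le m), DFA.eval_append_singleton,
      ih _ (by omega) m 0 rfl]
    simp [convDFA, convStep]
  · rcases lt_trichotomy m n with hmn | rfl | hmn
    · rw [convWord_succ_right hmn, DFA.eval_append_singleton, ih _ (by omega) _ _ rfl]
      simp [convDFA, convStep, hmn]
    · rw [convWord_succ_succ, DFA.eval_append_singleton, ih _ (by omega) _ _ rfl]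
      simp [convDFA, convStep]
    · rw [convWord_succ_left hmn, DFA.eval_append_singleton, ih _ (by omega) _ _ rfl]
      simp [convDFA, convStep, hmn]

lemma convDFA_accepts (R : ℕ → ℕ → Prop) : (convDFA R).accepts = convLang R := by
  ext w
  constructor
  · rintro ⟨m, n, h, hR⟩
    exact ⟨m, n, hR, eq_convWord_of_convDFA_eval R h⟩
  · rintro ⟨m, n, hR, rfl⟩
    exact ⟨m, n, convDFA_eval_convWord R m n, hR⟩

theorem DFA.accepts_isRegular_of_map {α σ τ : Type*} (M : DFA α σ) (π : σ → τ)
    (hπ : (Set.range π).Finite)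
    (hstep : ∀ s s' a, π s = π s' → π (M.step s a) = π (M.step s' a))
    (haccept : ∀ s s', π s = π s' → s ∈ M.accept → s' ∈ M.accept) :
    M.accepts.IsRegular := by
  have hfrom : ∀ s s', π s = π s' → M.acceptsFrom s = M.acceptsFrom s' := by
    intro s s' h
    ext w
    induction w generalizing s s' with
    | nil => exact ⟨haccept s s' h, haccept s' s h.symm⟩
    | cons a w ih => exact ih _ _ (hstep s s' a h)
  have : Nonempty σ := ⟨M.start⟩
  apply Language.IsRegular.of_finite_range_leftQuotient
  rw [Language.leftQuotient_accepts]
  refine (hπ.image fun t => M.acceptsFrom (Function.invFun π t)).subset ?_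
  rintro _ ⟨w, rfl⟩
  exact ⟨π (M.eval w), ⟨_, rfl⟩, hfrom _ _ (Function.invFun_eq ⟨_, rfl⟩)⟩

def gapProfile (k E m n : ℕ) : ℕ × ℕ × ℕ × ℕ := (m % k, n % k, min E (m - n), min E (n - m))

theorem regularRel_of_gapProfile {k E : ℕ} (hk : 0 < k) (hE : 0 < E) (R : ℕ → ℕ → Prop)
    (hR : ∀ m n m' n', gapProfile k E m n = gapProfile k E m' n' → R m n → R m' n') :
    RegularRel R := by
  rw [RegularRel, ← convDFA_accepts]
  refine (convDFA R).accepts_isRegular_of_map (Option.map fun p => gapProfile k E p.1 p.2)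
    ?_ ?_ ?_
  · refine ((((Set.finite_Iio k).prod ((Set.finite_Iio k).prod
      ((Set.finite_Iic E).prod (Set.finite_Iic E)))).image some).insert none).subset ?_
    rintro _ ⟨_ | ⟨m, n⟩, rfl⟩
    · exact Or.inl rfl
    · refine Or.inr ⟨_, ?_, rfl⟩
      simp [gapProfile, Nat.mod_lt _ hk]
  · rintro (_ | ⟨m, n⟩) (_ | ⟨m', n'⟩) a h <;> simp only [Option.map_none, Option.map_some,
      reduceCtorEq, Option.some.injEq, gapProfile, Prod.mk.injEq] at h
    · rfl
    obtain ⟨hm, hn, h₁, h₂⟩ := h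
    have hm1 : (m + 1) % k = (m' + 1) % k := Nat.ModEq.add_right 1 hm
    have hn1 : (n + 1) % k = (n' + 1) % k := Nat.ModEq.add_right 1 hn
    fin_cases a <;> simp only [convDFA, convStep] <;> split_ifs <;>
      simp only [Option.map_none, Option.map_some, gapProfile, hm, hn, hm1, hn1] <;> grind
  · rintro _ (_ | ⟨m', n'⟩) h ⟨m, n, rfl, hR₀⟩ <;> simp only [Option.map_none, Option.map_some,
      reduceCtorEq, Option.some.injEq] at h
    exact ⟨m', n', rfl, hR m n m' n' h hR₀⟩

lemma Nat.div_sub_div_eq_mod_add_sub_div (k m n : ℕ) : m / k - n / k = (n % k + (m - n)) / k := by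
  rcases Nat.eq_zero_or_pos k with rfl | hk
  · simp
  rcases le_total n m with h | h
  · have hm : m = n % k + (m - n) + k * (n / k) := by have := Nat.mod_add_div n k; omega
    conv_lhs => rw [hm, Nat.add_mul_div_left _ _ hk]
    exact Nat.add_sub_cancel _ _
  · rw [Nat.sub_eq_zero_of_le (Nat.div_le_div_right h), Nat.sub_eq_zero_of_le h, Nat.add_zero,
      Nat.div_eq_of_lt (Nat.mod_lt n hk)]

lemma min_add_div_eq_of_min_eq {k D r d d' : ℕ} (h : min ((D + 1) * k) d = min ((D + 1) * k) d') :
    min D ((r + d) / k) = min D ((r + d') / k) := by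
  rcases Nat.eq_zero_or_pos k with rfl | hk
  · simp
  rcases lt_or_ge d ((D + 1) * k) with hd | hd
  · rw [show d = d' by omega]
  · have hle : ∀ e, (D + 1) * k ≤ e → D ≤ (r + e) / k := fun e he => by
      rw [Nat.le_div_iff_mul_le hk]; rw [Nat.add_mul] at he; omega
    rw [min_eq_left (hle d hd), min_eq_left (hle d' (by omega))]

lemma min_div_sub_div_eq {k D m n m' n' : ℕ} (hn : n % k = n' % k)
    (h : min ((D + 1) * k) (m - n) = min ((D + 1) * k) (m' - n')) :
    min D (m / k - n / k) = min D (m' / k - n' / k) := by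
  rw [Nat.div_sub_div_eq_mod_add_sub_div, Nat.div_sub_div_eq_mod_add_sub_div, hn]
  exact min_add_div_eq_of_min_eq h

noncomputable def levelDecode (T : Type*) [Fintype T] [Nonempty T] : ℕ ≃ T × ℕ :=
  ((Nat.divModEquiv _).trans (Equiv.prodComm _ _)).trans
    ((Fintype.equivFin T).symm.prodCongr (Equiv.refl ℕ))

lemma levelDecode_apply {T : Type*} [Fintype T] [Nonempty T] (n : ℕ) :
    levelDecode T n =
      ((Fintype.equivFin T).symm (Fin.ofNat _ n), n / Fintype.card T) := rfl

def IsLevelGapInvariant {T : Type*} (D : ℕ) (R : T × ℕ → T × ℕ → Prop) : Prop :=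
  ∀ ⦃t u : T⦄ ⦃i j i' j' : ℕ⦄, min D (i - j) = min D (i' - j') → min D (j - i) = min D (j' - i') →
    R (t, i) (u, j) → R (t, i') (u, j')

theorem regularRel_levelDecode {T : Type*} [Fintype T] [Nonempty T] {D : ℕ}
    {R : T × ℕ → T × ℕ → Prop} (hR : IsLevelGapInvariant D R) :
    RegularRel fun m n => R (levelDecode T m) (levelDecode T n) := by
  refine regularRel_of_gapProfile (Fintype.card_pos (α := T))
    (Nat.mul_pos D.succ_pos (Fintype.card_pos (α := T))) _ fun m n m' n' h hmn => ?_
  simp only [gapProfile, Prod.mk.injEq] at h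
  obtain ⟨hm, hn, hmn', hnm'⟩ := h
  have hres : ∀ {x x'}, x % Fintype.card T = x' % Fintype.card T →
      Fin.ofNat (Fintype.card T) x = Fin.ofNat _ x' := fun h => Fin.ext (by simpa using h)
  rw [levelDecode_apply, levelDecode_apply] at hmn ⊢
  rw [← hres hm, ← hres hn]
  exact hR (min_div_sub_div_eq hn hmn') (min_div_sub_div_eq hm hnm') hmn

section Template

variable {T : Type*}

lemma templateSetoid_self_iff (t₀ : T) (x y : T × ℕ) :
    templateSetoid t₀ t₀ x y ↔ x = y ∨ (x.1 = t₀ ∧ y.1 = t₀) := by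
  constructor
  · have hS : Equivalence fun x y : T × ℕ => x = y ∨ (x.1 = t₀ ∧ y.1 = t₀) :=
      ⟨fun _ => Or.inl rfl, by grind, by grind⟩
    refine fun h => hS.eqvGen_iff.1 (Relation.EqvGen.mono ?_ _ _ h)
    rintro _ _ ⟨j, rfl, rfl⟩
    exact Or.inr ⟨rfl, rfl⟩
  · have hup : ∀ i d, templateSetoid t₀ t₀ (t₀, i) (t₀, i + d) := fun i d => by
      induction d with
      | zero => exact Relation.EqvGen.refl _
      | succ d ih => exact Relation.EqvGen.trans _ _ _ ih (Relation.EqvGen.rel _ _ ⟨_, rfl, rfl⟩)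
    obtain ⟨a, i⟩ := x
    obtain ⟨b, j⟩ := y
    rintro (h | ⟨rfl, rfl⟩)
    · exact h ▸ Relation.EqvGen.refl _
    rcases le_total i j with hij | hij
    · obtain ⟨d, rfl⟩ := Nat.exists_eq_add_of_le hij
      exact hup i d
    · obtain ⟨d, rfl⟩ := Nat.exists_eq_add_of_le hij
      exact Relation.EqvGen.symm _ _ (hup j d)

lemma templateSetoid_iff_of_ne {t₀ t₁ : T} (h : t₀ ≠ t₁) (x y : T × ℕ) :
    templateSetoid t₀ t₁ x y ↔ x = y ∨ (x.1 = t₁ ∧ y.1 = t₀ ∧ y.2 = x.2 + 1) ∨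
      (x.1 = t₀ ∧ y.1 = t₁ ∧ x.2 = y.2 + 1) := by
  constructor
  · have hS : Equivalence fun x y : T × ℕ => x = y ∨ (x.1 = t₁ ∧ y.1 = t₀ ∧ y.2 = x.2 + 1) ∨
        (x.1 = t₀ ∧ y.1 = t₁ ∧ x.2 = y.2 + 1) :=
      ⟨fun _ => Or.inl rfl, by grind, by grind⟩
    refine fun h => hS.eqvGen_iff.1 (Relation.EqvGen.mono ?_ _ _ h)
    rintro _ _ ⟨j, rfl, rfl⟩
    exact Or.inr (Or.inl ⟨rfl, rfl, rfl⟩)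
  · obtain ⟨a, i⟩ := x
    obtain ⟨b, j⟩ := y
    rintro (h | ⟨rfl, rfl, rfl⟩ | ⟨rfl, rfl, rfl⟩)
    · exact h ▸ Relation.EqvGen.refl _
    · exact Relation.EqvGen.rel _ _ ⟨i, rfl, rfl⟩
    · exact Relation.EqvGen.symm _ _ (Relation.EqvGen.rel _ _ ⟨j, rfl, rfl⟩)

lemma templateSetoid_isLevelGapInvariant (t₀ t₁ : T) :
    IsLevelGapInvariant 2 (templateSetoid t₀ t₁) := by
  intro t u i j i' j' hij hji
  have h₀ : i = j ↔ i' = j' := by omega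
  have h₁ : j = i + 1 ↔ j' = i' + 1 := by omega
  have h₂ : i = j + 1 ↔ i' = j' + 1 := by omega
  by_cases h : t₀ = t₁
  · subst h
    simp only [templateSetoid_self_iff, Prod.mk.injEq, h₀, imp_self]
  · simp only [templateSetoid_iff_of_ne h, Prod.mk.injEq, h₀, h₁, h₂, imp_self]

lemma templateSetoid_level_of_ne {t₀ t₁ : T} (h : t₀ ≠ t₁) {a t : T} {p i : ℕ}
    (hx : templateSetoid t₀ t₁ (a, p) (t, i)) : p ≤ i + 1 ∧ i ≤ p + 1 ∧ (p < i → a = t₁) := by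
  rw [templateSetoid_iff_of_ne h] at hx
  grind

lemma templateSetoid_shift_of_ne {t₀ t₁ : T} (h : t₀ ≠ t₁) {a t : T} {p i i' : ℕ}
    (hx : templateSetoid t₀ t₁ (a, p) (t, i)) (hi : i ≤ p + i') :
    templateSetoid t₀ t₁ (a, p + i' - i) (t, i') := by
  rw [templateSetoid_iff_of_ne h] at hx ⊢
  grind

def templateEdge (η : T → T → Prop) (t₀ t₁ : T) (x y : T × ℕ) : Prop :=
  ∃ x' y' : T × ℕ, templateSetoid t₀ t₁ x' x ∧ templateSetoid t₀ t₁ y' y ∧ x'.2 = y'.2 ∧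
    η x'.1 y'.1

lemma templateEdge_isLevelGapInvariant_of_ne {η : T → T → Prop} (hirr : ∀ v, ¬ η v v)
    {t₀ t₁ : T} (h : t₀ ≠ t₁) : IsLevelGapInvariant 3 (templateEdge η t₀ t₁) := by
  rintro t u i j i' j' hij hji ⟨⟨a, p⟩, ⟨b, q⟩, hx, hy, rfl : p = q, hab⟩
  have hx' := templateSetoid_level_of_ne h hx
  have hy' := templateSetoid_level_of_ne h hy
  have hgap : i' + j = j' + i := by omega
  by_cases hp : i ≤ p + i'
  · exact ⟨(a, p + i' - i), (b, p + j' - j), templateSetoid_shift_of_ne h hx hp,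
      templateSetoid_shift_of_ne h hy (by omega), by simp only; omega, hab⟩
  · -- shifting fails only for two copies of `t₁` one level below both base points
    obtain rfl := hx'.2.2 (by omega)
    obtain rfl := hy'.2.2 (by omega)
    exact absurd hab (hirr _)

lemma templateEdge_self_iff (η : T → T → Prop) (t₀ t u : T) (i j : ℕ) :
    templateEdge η t₀ t₀ (t, i) (u, j) ↔
      (i = j ∧ η t u) ∨ (t = t₀ ∧ η t₀ u) ∨ (u = t₀ ∧ η t t₀) := by
  simp only [templateEdge, templateSetoid_self_iff, Prod.ext_iff]
  constructor
  · rintro ⟨⟨a, p⟩, ⟨b, q⟩, hx, hy, rfl : p = q, hab⟩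
    grind
  · rintro (⟨rfl, hη⟩ | ⟨rfl, hη⟩ | ⟨rfl, hη⟩)
    · exact ⟨(t, i), (u, i), by simp, by simp, rfl, hη⟩
    · exact ⟨(t, j), (u, j), by simp, by simp, rfl, hη⟩
    · exact ⟨(t, i), (u, i), by simp, by simp, rfl, hη⟩

lemma templateEdge_isLevelGapInvariant {η : T → T → Prop} (hirr : ∀ v, ¬ η v v) (t₀ t₁ : T) :
    IsLevelGapInvariant 3 (templateEdge η t₀ t₁) := by
  by_cases h : t₀ = t₁
  · subst h
    intro t u i j i' j' hij hji
    have h₀ : i = j ↔ i' = j' := by omega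
    simp only [templateEdge_self_iff, h₀, imp_self]
  · exact templateEdge_isLevelGapInvariant_of_ne hirr h

end Template

lemma unaryLang_univ_isRegular : (unaryLang Set.univ).IsRegular :=
  ⟨Unit, inferInstance, ⟨fun _ _ => (), (), Set.univ⟩, Set.eq_univ_of_forall fun _ => trivial⟩

theorem stmt8_general {T : Type*} [Fintype T] [Nonempty T]
    (η : T → T → Prop) (hη : IsDirectedTree η)
    (t₀ t₁ : T) :
    UnaryFAPresentable (fun a b : Quotient (templateSetoid t₀ t₁) =>
      ∃ x y : T × ℕ, Quotient.mk (templateSetoid t₀ t₁) x = a ∧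
        Quotient.mk (templateSetoid t₀ t₁) y = b ∧
        x.2 = y.2 ∧ η x.1 y.1) := by
  refine ⟨Set.univ, unaryLang_univ_isRegular,
    fun n => Quotient.mk (templateSetoid t₀ t₁) (levelDecode T n), ?_, ?_, ?_⟩
  · exact Quotient.ind fun x => ⟨(levelDecode T).symm x, trivial, by simp⟩
  · simpa only [Set.mem_univ, true_and, Quotient.eq]
      using regularRel_levelDecode (templateSetoid_isLevelGapInvariant t₀ t₁)
  · simpa only [Set.mem_univ, true_and, Quotient.eq, templateEdge]
      using regularRel_levelDecode (templateEdge_isLevelGapInvariant hη.1 t₀ t₁)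

theorem stmt8 {T : Type*} [Fintype T] [Nonempty T]
    (η : T → T → Prop) (hη : IsDirectedTree η)
    (t₀ t₁ : T) (hleaf : ∃! v, (adjGraph η).Adj t₀ v) :
    UnaryFAPresentable (fun a b : Quotient (templateSetoid t₀ t₁) =>
      ∃ x y : T × ℕ, Quotient.mk (templateSetoid t₀ t₁) x = a ∧
        Quotient.mk (templateSetoid t₀ t₁) y = b ∧
        x.2 = y.2 ∧ η x.1 y.1) :=
  stmt8_general η hη t₀ t₁
end

section
/- Let F be a finite type, n ∈ ℕ, and let ρ be a binary relation on F ⊕ (Fin n × ℕ) in propagated form. Let S denote the subset of F ⊕ (Fin n × ℕ) consisting of all elements of F together with all pairs (k, i) with i < 5. Then for all x, y ∈ F ⊕ (Fin n × ℕ) there exist x', y' ∈ S such that: if x = y then x' = y'; ρ x y ↔ ρ x' y'; ρ y x ↔ ρ y' x'; ρ x x ↔ ρ x' x'; and ρ y y ↔ ρ y' y'. (That is, the map x ↦ x', y ↦ y' is an isomorphism of two-element induced substructures.) -/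
/-- `clamp d` truncates the integer `d` to the interval `[-2, 2]`. -/
def clamp (d : ℤ) : ℤ := max (-2) (min 2 d)

/-- A binary relation on `F ⊕ (Fin n × ℕ)` is in propagated form if whether two
elements are related depends only on their rows and on the clamped difference of
their column indices (respectively, on whether the column index is `0` or not,
for pairs involving an element of `F`). -/
def PropagatedForm {F : Type*} {n : ℕ} (ρ : F ⊕ (Fin n × ℕ) → F ⊕ (Fin n × ℕ) → Prop) : Prop :=
  (∀ (k l : Fin n) (i j i' j' : ℕ), clamp ((j : ℤ) - (i : ℤ)) = clamp ((j' : ℤ) - (i' : ℤ)) →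
    (ρ (Sum.inr (k, i)) (Sum.inr (l, j)) ↔ ρ (Sum.inr (k, i')) (Sum.inr (l, j')))) ∧
  (∀ (q : F) (k : Fin n) (i i' : ℕ), min i 1 = min i' 1 →
    ((ρ (Sum.inl q) (Sum.inr (k, i)) ↔ ρ (Sum.inl q) (Sum.inr (k, i'))) ∧
     (ρ (Sum.inr (k, i)) (Sum.inl q) ↔ ρ (Sum.inr (k, i')) (Sum.inl q))))

/-- The finite core: all elements of `F` together with all pairs `(k, i)` with `i < 5`. -/
def inCore {F : Type*} {n : ℕ} : F ⊕ (Fin n × ℕ) → Prop :=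
  Sum.elim (fun _ => True) (fun p => p.2 < 5)


theorem stmt10 {F : Type*} [Fintype F] {n : ℕ}
    (ρ : F ⊕ (Fin n × ℕ) → F ⊕ (Fin n × ℕ) → Prop) (hρ : PropagatedForm ρ) :
    ∀ x y : F ⊕ (Fin n × ℕ), ∃ x' y' : F ⊕ (Fin n × ℕ),
      inCore x' ∧ inCore y' ∧
      (x = y → x' = y') ∧
      (ρ x y ↔ ρ x' y') ∧ (ρ y x ↔ ρ y' x') ∧
      (ρ x x ↔ ρ x' x') ∧ (ρ y y ↔ ρ y' y') := by

  obtain ⟨h1, h2⟩ := hρ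
  rintro (q | ⟨k, i⟩) (r | ⟨l, j⟩)
  · exact ⟨Sum.inl q, Sum.inl r, trivial, trivial, fun h => h, Iff.rfl, Iff.rfl, Iff.rfl, Iff.rfl⟩
  · refine ⟨Sum.inl q, Sum.inr (l, min j 1), trivial, by simp only [inCore, Sum.elim_inr]; omega, by simp, ?_, ?_, Iff.rfl, ?_⟩
    · exact (h2 q l j (min j 1) (by omega)).1
    · exact (h2 q l j (min j 1) (by omega)).2
    · exact h1 l l j j (min j 1) (min j 1) (by simp)
  · refine ⟨Sum.inr (k, min i 1), Sum.inl r, by simp only [inCore, Sum.elim_inr]; omega, trivial, by simp, ?_, ?_, ?_, Iff.rfl⟩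
    · exact (h2 r k i (min i 1) (by omega)).2
    · exact (h2 r k i (min i 1) (by omega)).1
    · exact h1 k k i i (min i 1) (min i 1) (by simp)
  · rcases le_or_gt i j with h | h
    · refine ⟨Sum.inr (k, min i 2), Sum.inr (l, min i 2 + min (j - i) 2), by simp only [inCore, Sum.elim_inr]; omega,
        by simp only [inCore, Sum.elim_inr]; omega, ?_, ?_, ?_, ?_, ?_⟩
      · rintro heq
        simp only [Sum.inr.injEq, Prod.mk.injEq] at heq
        obtain ⟨hk, hi⟩ := heq; subst hk; subst hi; simp
      · exact h1 k l i j (min i 2) (min i 2 + min (j - i) 2) (by simp only [clamp]; omega)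
      · exact h1 l k j i (min i 2 + min (j - i) 2) (min i 2) (by simp only [clamp]; omega)
      · exact h1 k k i i (min i 2) (min i 2) (by simp only [clamp]; omega)
      · exact h1 l l j j (min i 2 + min (j - i) 2) (min i 2 + min (j - i) 2) (by simp only [clamp]; omega)
    · refine ⟨Sum.inr (k, min j 2 + min (i - j) 2), Sum.inr (l, min j 2), by simp only [inCore, Sum.elim_inr]; omega,
        by simp only [inCore, Sum.elim_inr]; omega, ?_, ?_, ?_, ?_, ?_⟩
      · rintro heq; exfalso
        simp only [Sum.inr.injEq, Prod.mk.injEq] at heq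
        omega
      · exact h1 k l i j (min j 2 + min (i - j) 2) (min j 2) (by simp only [clamp]; omega)
      · exact h1 l k j i (min j 2) (min j 2 + min (i - j) 2) (by simp only [clamp]; omega)
      · exact h1 k k i i (min j 2 + min (i - j) 2) (min j 2 + min (i - j) 2) (by simp only [clamp]; omega)
      · exact h1 l l j j (min j 2) (min j 2) (by simp only [clamp]; omega)
end

section
/- Let F be a finite type, n ∈ ℕ, and let ρ be a binary relation on F ⊕ (Fin n × ℕ) in propagated form. Let S denote the subset of F ⊕ (Fin n × ℕ) consisting of all elements of F together with all pairs (k, i) with i < 5. Then ρ is transitive if and only if the restriction of ρ to S is transitive (i.e., for all x, y, z ∈ S, ρ x y and ρ y z imply ρ x z). -/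
private lemma key1 (a : ℕ) : ∃ a' : ℕ, a' < 5 ∧ min a 1 = min a' 1 :=
  ⟨min a 1, by omega, by omega⟩

private lemma key2 (a b : ℕ) : ∃ a' b' : ℕ, a' < 5 ∧ b' < 5 ∧
    clamp ((b:ℤ) - a) = clamp ((b':ℤ) - a') ∧ min a 1 = min a' 1 ∧ min b 1 = min b' 1 := by
  rcases le_total a b with h | h
  · exact ⟨min a 1, min a 1 + min (b - a) 2, by omega, by omega,
      by simp only [clamp]; omega, by omega, by omega⟩
  · exact ⟨min b 1 + min (a - b) 2, min b 1, by omega, by omega,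
      by simp only [clamp]; omega, by omega, by omega⟩

private lemma key3 (a b c : ℕ) : ∃ a' b' c' : ℕ, a' < 5 ∧ b' < 5 ∧ c' < 5 ∧
    clamp ((b:ℤ) - a) = clamp ((b':ℤ) - a') ∧
    clamp ((c:ℤ) - b) = clamp ((c':ℤ) - b') ∧
    clamp ((c:ℤ) - a) = clamp ((c':ℤ) - a') := by
  rcases le_total a b with hab | hab
  · rcases le_total b c with hbc | hbc
    · -- a ≤ b ≤ c
      exact ⟨0, min (b - a) 2, min (b - a) 2 + min (c - b) 2, by omega, by omega, by omega,
        by simp only [clamp]; omega, by simp only [clamp]; omega, by simp only [clamp]; omega⟩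
    · rcases le_total a c with hac | hac
      · -- a ≤ c ≤ b
        exact ⟨0, min (c - a) 2 + min (b - c) 2, min (c - a) 2, by omega, by omega, by omega,
          by simp only [clamp]; omega, by simp only [clamp]; omega, by simp only [clamp]; omega⟩
      · -- c ≤ a ≤ b
        exact ⟨min (a - c) 2, min (a - c) 2 + min (b - a) 2, 0, by omega, by omega, by omega,
          by simp only [clamp]; omega, by simp only [clamp]; omega, by simp only [clamp]; omega⟩
  · rcases le_total a c with hac | hac
    · -- b ≤ a ≤ c
      exact ⟨min (a - b) 2, 0, min (a - b) 2 + min (c - a) 2, by omega, by omega, by omega,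
        by simp only [clamp]; omega, by simp only [clamp]; omega, by simp only [clamp]; omega⟩
    · rcases le_total b c with hbc | hbc
      · -- b ≤ c ≤ a
        exact ⟨min (c - b) 2 + min (a - c) 2, 0, min (c - b) 2, by omega, by omega, by omega,
          by simp only [clamp]; omega, by simp only [clamp]; omega, by simp only [clamp]; omega⟩
      · -- c ≤ b ≤ a
        exact ⟨min (b - c) 2 + min (a - b) 2, min (b - c) 2, 0, by omega, by omega, by omega,
          by simp only [clamp]; omega, by simp only [clamp]; omega, by simp only [clamp]; omega⟩

theorem stmt11 {F : Type*} [Fintype F] {n : ℕ}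
    (ρ : F ⊕ (Fin n × ℕ) → F ⊕ (Fin n × ℕ) → Prop) (hρ : PropagatedForm ρ) :
    Transitive ρ ↔
      ∀ x y z : F ⊕ (Fin n × ℕ), inCore x → inCore y → inCore z →
        ρ x y → ρ y z → ρ x z := by
  constructor
  · intro h x y z _ _ _ hxy hyz
    exact h hxy hyz
  · intro h x y z hxy hyz
    obtain ⟨h1, h2⟩ := hρ
    match x, y, z with
    | .inl p, .inl q, .inl r =>
      exact h (.inl p) (.inl q) (.inl r) trivial trivial trivial hxy hyz
    | .inl p, .inl q, .inr (k, i) =>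
      obtain ⟨i', hi5, hi⟩ := key1 i
      have ci : inCore (F := F) (Sum.inr (k, i')) := hi5
      exact ((h2 p k i i' hi).1).mpr
        (h (.inl p) (.inl q) (.inr (k, i')) trivial trivial ci hxy (((h2 q k i i' hi).1).mp hyz))
    | .inl p, .inr (k, i), .inl r =>
      obtain ⟨i', hi5, hi⟩ := key1 i
      have ci : inCore (F := F) (Sum.inr (k, i')) := hi5
      exact h (.inl p) (.inr (k, i')) (.inl r) trivial ci trivial
        (((h2 p k i i' hi).1).mp hxy) (((h2 r k i i' hi).2).mp hyz)
    | .inr (k, i), .inl q, .inl r =>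
      obtain ⟨i', hi5, hi⟩ := key1 i
      have ci : inCore (F := F) (Sum.inr (k, i')) := hi5
      exact ((h2 r k i i' hi).2).mpr
        (h (.inr (k, i')) (.inl q) (.inl r) ci trivial trivial (((h2 q k i i' hi).2).mp hxy) hyz)
    | .inl p, .inr (k, i), .inr (l, j) =>
      obtain ⟨i', j', hi5, hj5, hcl, hi, hj⟩ := key2 i j
      have ci : inCore (F := F) (Sum.inr (k, i')) := hi5
      have cj : inCore (F := F) (Sum.inr (l, j')) := hj5
      exact ((h2 p l j j' hj).1).mpr
        (h (.inl p) (.inr (k, i')) (.inr (l, j')) trivial ci cj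
          (((h2 p k i i' hi).1).mp hxy) ((h1 k l i j i' j' hcl).mp hyz))
    | .inr (k, i), .inl q, .inr (l, j) =>
      obtain ⟨i', j', hi5, hj5, hcl, hi, hj⟩ := key2 i j
      have ci : inCore (F := F) (Sum.inr (k, i')) := hi5
      have cj : inCore (F := F) (Sum.inr (l, j')) := hj5
      exact (h1 k l i j i' j' hcl).mpr
          (h (.inr (k, i')) (.inl q) (.inr (l, j')) ci trivial cj
            (((h2 q k i i' hi).2).mp hxy) (((h2 q l j j' hj).1).mp hyz))
    | .inr (k, i), .inr (l, j), .inl r =>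
      obtain ⟨i', j', hi5, hj5, hcl, hi, hj⟩ := key2 i j
      have ci : inCore (F := F) (Sum.inr (k, i')) := hi5
      have cj : inCore (F := F) (Sum.inr (l, j')) := hj5
      exact ((h2 r k i i' hi).2).mpr
        (h (.inr (k, i')) (.inr (l, j')) (.inl r) ci cj trivial
          ((h1 k l i j i' j' hcl).mp hxy) (((h2 r l j j' hj).2).mp hyz))
    | .inr (k, i), .inr (l, j), .inr (m, o) =>
      obtain ⟨i', j', o', hi5, hj5, ho5, hc1, hc2, hc3⟩ := key3 i j o
      have ci : inCore (F := F) (Sum.inr (k, i')) := hi5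
      have cj : inCore (F := F) (Sum.inr (l, j')) := hj5
      have co : inCore (F := F) (Sum.inr (m, o')) := ho5
      exact ((h1 k m i o i' o' hc3)).mpr
        (h (.inr (k, i')) (.inr (l, j')) (.inr (m, o')) ci cj co
          ((h1 k l i j i' j' hc1).mp hxy) ((h1 l m j o j' o' hc2).mp hyz))
end

section
/- Let X be a countable set and ≤ a quasi-order on X (a reflexive and transitive binary relation) such that (X, ≤) is unary FA-presentable. Then X can be partitioned into finitely many pairwise disjoint subsets A₁, …, A_m such that each part A_p, with the induced relation, is one of: a one-element set (a trivial quasi-order); a countably infinite antichain (for distinct x, y ∈ A_p neither x ≤ y nor y ≤ x); a countably infinite ascending chain (there is an enumeration A_p = {x_0, x_1, x_2, …} with x_i ≤ x_j iff i ≤ j); a countably infinite descending chain (an enumeration with x_i ≤ x_j iff j ≤ i); or a countably infinite strongly connected component (x ≤ y for all x, y ∈ A_p). -/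
/-!
Pumping the automata for equality and for `≤` yields a threshold `N` and a period `c` such that,
for every `b ≥ N` in `L`, the thread `k ↦ φ (b + k * c)` stays in `L` and both relations
between two threads are invariant under advancing both by one step. Hence a thread that
repeats a value is periodic and has finite range, and two threads that meet are nested, so the
maximal injective threads are pairwise disjoint and leave out only finitely many elements.
Along an injective thread, `≤` between positions `i < j` depends only on `j - i`, and is
constant once `j - i ≥ N` (pump the gap in the convolution word), and symmetrically for
`i > j`. By transitivity, `e i ≤ e j` for some `i < j` already forces the far relation, so the
two far truth values decide everything: both true gives a clique, both false an antichain, and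
exactly one true splits the thread into `N` ascending or descending chains along residues
modulo `N`.
-/

open Function Set

section Partitions

variable {X : Type*} (r : X → X → Prop)

def IsBasicPart (A : Set X) : Prop :=
  (∃ x, A = {x}) ∨
  (A.Infinite ∧ ∀ x ∈ A, ∀ y ∈ A, x ≠ y → ¬ r x y ∧ ¬ r y x) ∨
  (∃ e : ℕ → X, Injective e ∧ range e = A ∧ ∀ i j : ℕ, r (e i) (e j) ↔ i ≤ j) ∨
  (∃ e : ℕ → X, Injective e ∧ range e = A ∧ ∀ i j : ℕ, r (e i) (e j) ↔ j ≤ i) ∨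
  (A.Infinite ∧ ∀ x ∈ A, ∀ y ∈ A, r x y)

def HasBasicPartition (S : Set X) : Prop :=
  ∃ P : Set (Set X), P.Finite ∧ P.PairwiseDisjoint id ∧ ⋃₀ P = S ∧
    ∀ A ∈ P, IsBasicPart r A

namespace HasBasicPartition

variable {r}

lemma of_isBasicPart {A : Set X} (h : IsBasicPart r A) : HasBasicPartition r A :=
  ⟨{A}, finite_singleton A, pairwiseDisjoint_singleton A id, sUnion_singleton A, by simpa⟩

lemma of_finite {S : Set X} (hS : S.Finite) : HasBasicPartition r S := by
  refine ⟨(fun x => {x}) '' S, hS.image _, ?_, by simp, ?_⟩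
  · rintro _ ⟨x, -, rfl⟩ _ ⟨y, -, rfl⟩ hxy
    exact disjoint_singleton.mpr fun h => hxy (h ▸ rfl)
  · rintro _ ⟨x, -, rfl⟩
    exact Or.inl ⟨x, rfl⟩

lemma union {A B : Set X} (hA : HasBasicPartition r A) (hB : HasBasicPartition r B)
    (hAB : Disjoint A B) : HasBasicPartition r (A ∪ B) := by
  obtain ⟨P, hPfin, hPdisj, rfl, hP⟩ := hA
  obtain ⟨Q, hQfin, hQdisj, rfl, hQ⟩ := hB
  refine ⟨P ∪ Q, hPfin.union hQfin, pairwiseDisjoint_union.mpr ⟨hPdisj, hQdisj, ?_⟩,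
    sUnion_union P Q, fun A hA => hA.elim (hP A) (hQ A)⟩
  exact fun C hC D hD _ => hAB.mono (subset_sUnion_of_mem hC) (subset_sUnion_of_mem hD)

lemma biUnion {ι : Type*} {s : Set ι} (hs : s.Finite) {A : ι → Set X}
    (hdisj : s.PairwiseDisjoint A) (h : ∀ i ∈ s, HasBasicPartition r (A i)) :
    HasBasicPartition r (⋃ i ∈ s, A i) := by
  choose! P hPfin hPdisj hPA hP using h
  refine ⟨⋃ i ∈ s, P i, hs.biUnion hPfin, PairwiseDisjoint.biUnion ?_ hPdisj, ?_, ?_⟩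
  · have hunion : ∀ i ∈ s, ⨆ B ∈ P i, id B = A i := fun i hi => by
      rw [← hPA i hi, sUnion_eq_biUnion]
      rfl
    intro i hi j hj hij
    change Disjoint (⨆ B ∈ P i, id B) (⨆ B ∈ P j, id B)
    rw [hunion i hi, hunion j hj]
    exact hdisj hi hj hij
  · simp only [sUnion_iUnion]
    exact iUnion₂_congr hPA
  · simp only [mem_iUnion]
    rintro B ⟨i, hi, hB⟩
    exact hP i hi B hB

/-- Only the maximal members of a laminar family are needed, and they are pairwise disjoint. -/
lemma sUnion_of_laminar {T : Set (Set X)} (hT : T.Finite)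
    (hlam : ∀ A ∈ T, ∀ B ∈ T, ¬ Disjoint A B → A ⊆ B ∨ B ⊆ A)
    (h : ∀ A ∈ T, HasBasicPartition r A) : HasBasicPartition r (⋃₀ T) := by
  set M := {A | Maximal (· ∈ T) A}
  have hMT : M ⊆ T := fun A hA => hA.prop
  have hcover : ⋃₀ T = ⋃ A ∈ M, A := by
    refine subset_antisymm ?_ (iUnion₂_subset fun A hA => subset_sUnion_of_mem (hMT hA))
    rintro x ⟨A, hA, hx⟩
    obtain ⟨B, hAB, hB⟩ := hT.exists_le_maximal hA
    exact mem_biUnion hB (hAB hx)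
  rw [hcover]
  refine biUnion (hT.subset hMT) ?_ fun A hA => h A (hMT hA)
  intro A hA B hB hne
  by_contra hAB
  rcases hlam A (hMT hA) B (hMT hB) hAB with hsub | hsub
  · exact hne (hA.eq_of_subset hB.prop hsub)
  · exact hne (hB.eq_of_subset hA.prop hsub).symm

lemma exists_fin {S : Set X} (h : HasBasicPartition r S) :
    ∃ (m : ℕ) (A : Fin m → Set X), (∀ p q : Fin m, p ≠ q → Disjoint (A p) (A q)) ∧
      (⋃ p, A p) = S ∧ ∀ p, IsBasicPart r (A p) := by
  obtain ⟨P, hPfin, hPdisj, rfl, hP⟩ := h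
  obtain ⟨m, A, hA, rfl⟩ := hPfin.fin_param
  exact ⟨m, A, fun p q hpq => hPdisj (mem_range_self p) (mem_range_self q) (hA.ne hpq),
    (sUnion_range A).symm, fun p => hP _ (mem_range_self p)⟩

end HasBasicPartition

lemma hasBasicPartition_range_of_residues {e : ℕ → X} {N : ℕ} (hN : 0 < N)
    (he : Injective e) (hres : ∀ s, IsBasicPart r (range fun k => e (s + k * N))) :
    HasBasicPartition r (range e) := by
  have hsplit : range e = ⋃ s ∈ Iio N, range fun k => e (s + k * N) := by
    ext x
    simp only [mem_range, mem_iUnion, mem_Iio]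
    constructor
    · rintro ⟨n, rfl⟩
      exact ⟨n % N, Nat.mod_lt n hN, n / N, congrArg e (Nat.mod_add_div' n N)⟩
    · rintro ⟨s, -, k, rfl⟩
      exact ⟨_, rfl⟩
  rw [hsplit]
  refine HasBasicPartition.biUnion (finite_Iio N) ?_ fun s _ => .of_isBasicPart (hres s)
  intro s hs s' hs' hne
  refine disjoint_left.mpr ?_
  rintro _ ⟨k, rfl⟩ ⟨k', hk'⟩
  have h := congrArg (· % N) (he hk')
  simp only [Nat.add_mul_mod_self_right, Nat.mod_eq_of_lt hs, Nat.mod_eq_of_lt hs'] at h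
  exact hne h.symm

end Partitions

section SequencePatterns

variable {X : Type*}

structure StablePattern (r : X → X → Prop) (e : ℕ → X) (N : ℕ) : Prop where
  shift : ∀ i j, r (e i) (e j) ↔ r (e (i + 1)) (e (j + 1))
  right : ∀ i j, i + N ≤ j → (r (e i) (e j) ↔ r (e i) (e (j + 1)))
  left : ∀ i j, j + N ≤ i → (r (e i) (e j) ↔ r (e (i + 1)) (e j))

namespace StablePattern

variable {r : X → X → Prop} {e : ℕ → X} {N : ℕ}

lemma swap (h : StablePattern r e N) : StablePattern (swap r) e N :=
  ⟨fun i j => h.shift j i, fun i j hij => h.left j i hij, fun i j hij => h.right j i hij⟩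

lemma rel_iff_add (h : StablePattern r e N) (i j k : ℕ) :
    r (e i) (e j) ↔ r (e (i + k)) (e (j + k)) := by
  induction k with
  | zero => rfl
  | succ k ih => exact ih.trans (h.shift _ _)

lemma rel_iff_of_add_le (h : StablePattern r e N) {i j : ℕ} (hij : i + N ≤ j) :
    r (e i) (e j) ↔ r (e 0) (e N) := by
  have hfar : ∀ m, N ≤ m → (r (e 0) (e m) ↔ r (e 0) (e N)) := by
    intro m hm
    induction m, hm using Nat.le_induction with
    | base => rfl
    | succ m hm ih => exact (h.right 0 m (by omega)).symm.trans ih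
  have hshift := h.rel_iff_add 0 (j - i) i
  rw [zero_add, Nat.sub_add_cancel (by omega)] at hshift
  exact hshift.symm.trans (hfar _ (by omega))

lemma rel_iff_of_add_le' (h : StablePattern r e N) {i j : ℕ} (hji : j + N ≤ i) :
    r (e i) (e j) ↔ r (e N) (e 0) :=
  h.swap.rel_iff_of_add_le hji

/-- Chaining `e i ≤ e j` along its shifts reaches distance `N`. -/
lemma rel_of_rel_of_lt [IsTrans X r] (h : StablePattern r e N) {i j : ℕ} (hij : i < j)
    (hr : r (e i) (e j)) : r (e 0) (e N) := by
  obtain ⟨d, rfl⟩ := Nat.exists_eq_add_of_lt hij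
  have hchain : ∀ k, r (e i) (e (i + (k + 1) * (d + 1))) := by
    intro k
    induction k with
    | zero => convert hr using 2; ring
    | succ k ih =>
      have hstep : r (e (i + (k + 1) * (d + 1))) (e (i + (k + 1 + 1) * (d + 1))) := by
        convert (h.rel_iff_add i (i + d + 1) ((k + 1) * (d + 1))).mp hr using 2; ring
      exact trans_of r ih hstep
  refine (h.rel_iff_of_add_le ?_).mp (hchain N)
  nlinarith

lemma rel_add_mul_iff [Std.Refl r] (h : StablePattern r e N) (hU : r (e 0) (e N))
    (hD : ¬ r (e N) (e 0)) (s i j : ℕ) :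
    r (e (s + i * N)) (e (s + j * N)) ↔ i ≤ j := by
  constructor
  · intro hr
    by_contra! hji
    exact hD ((h.rel_iff_of_add_le' (by nlinarith)).mp hr)
  · intro hij
    rcases hij.eq_or_lt with rfl | hlt
    · exact refl_of r _
    · exact (h.rel_iff_of_add_le (by nlinarith)).mpr hU

theorem hasBasicPartition_range [IsPreorder X r] (h : StablePattern r e N) (hN : 0 < N)
    (he : Injective e) : HasBasicPartition r (range e) := by
  have hinf : (range e).Infinite := infinite_range_of_injective he
  have hres : ∀ s, Injective fun k => e (s + k * N) :=
    fun s => he.comp ((add_right_injective s).comp (mul_left_injective₀ hN.ne'))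
  by_cases hU : r (e 0) (e N) <;> by_cases hD : r (e N) (e 0)
  · refine .of_isBasicPart (Or.inr <| Or.inr <| Or.inr <| Or.inr ⟨hinf, ?_⟩)
    rintro _ ⟨i, rfl⟩ _ ⟨j, rfl⟩
    exact trans_of r ((h.rel_iff_of_add_le (j := i + j + N) (by omega)).mpr hU)
      ((h.rel_iff_of_add_le' (by omega)).mpr hD)
  · exact hasBasicPartition_range_of_residues r hN he fun s =>
      Or.inr <| Or.inr <| Or.inl ⟨_, hres s, rfl, h.rel_add_mul_iff hU hD s⟩
  · exact hasBasicPartition_range_of_residues r hN he fun s =>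
      Or.inr <| Or.inr <| Or.inr <| Or.inl
        ⟨_, hres s, rfl, fun i j => h.swap.rel_add_mul_iff hD hU s j i⟩
  · refine .of_isBasicPart (Or.inr <| Or.inl ⟨hinf, ?_⟩)
    have hnot : ∀ i j, i < j → ¬ r (e i) (e j) ∧ ¬ r (e j) (e i) :=
      fun i j hij => ⟨fun hr => hU (h.rel_of_rel_of_lt hij hr),
        fun hr => hD (h.swap.rel_of_rel_of_lt hij hr)⟩
    rintro _ ⟨i, rfl⟩ _ ⟨j, rfl⟩ hne
    rcases lt_or_gt_of_ne (ne_of_apply_ne e hne) with hij | hji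
    · exact hnot i j hij
    · exact (hnot j i hji).symm

end StablePattern

end SequencePatterns

section Threads

variable {X : Type*} {u v : ℕ → X}

lemma eq_iff_eq_add (h : ∀ i j, u i = v j ↔ u (i + 1) = v (j + 1)) (i j k : ℕ) :
    u i = v j ↔ u (i + k) = v (j + k) := by
  induction k with
  | zero => rfl
  | succ k ih => exact ih.trans (h _ _)

lemma range_subset_range_of_eq (h : ∀ i j, u i = v j ↔ u (i + 1) = v (j + 1)) {i j : ℕ}
    (huv : u i = v j) (hji : j ≤ i) : range v ⊆ range u := by
  rintro _ ⟨k, rfl⟩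
  refine ⟨k + (i - j), ?_⟩
  rw [eq_iff_eq_add h _ _ j, show k + (i - j) + j = i + k by omega, add_comm k j]
  exact (eq_iff_eq_add h i j k).mp huv

lemma range_subset_or_of_not_disjoint (h : ∀ i j, u i = v j ↔ u (i + 1) = v (j + 1))
    (huv : ¬ Disjoint (range u) (range v)) : range u ⊆ range v ∨ range v ⊆ range u := by
  obtain ⟨_, ⟨i, rfl⟩, j, hj⟩ := not_disjoint_iff.mp huv
  rcases le_total j i with hji | hij
  · exact Or.inr (range_subset_range_of_eq h hj.symm hji)
  · refine Or.inl (range_subset_range_of_eq (fun i j => ?_) hj hij)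
    rw [eq_comm, h, eq_comm]

lemma finite_range_of_not_injective (h : ∀ i j, u i = u j ↔ u (i + 1) = u (j + 1))
    (hu : ¬ Injective u) : (range u).Finite := by
  obtain ⟨i, j, hij, hne⟩ := not_injective_iff.mp hu
  wlog hlt : i < j generalizing i j
  · exact this j i hij.symm hne.symm (by omega)
  have hper : Periodic u (j - i) := by
    have h0 : u 0 = u (j - i) := by
      rw [eq_iff_eq_add h 0 _ i, zero_add, Nat.sub_add_cancel hlt.le]
      exact hij
    intro k
    simpa [add_comm] using ((eq_iff_eq_add h 0 _ k).mp h0).symm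
  refine ((finite_Iio (j - i)).image u).subset ?_
  rintro _ ⟨k, rfl⟩
  exact ⟨k % (j - i), Nat.mod_lt k (by omega), hper.map_mod_nat k⟩

end Threads

section Pumping

/-- Beyond the threshold `N`, the convolution language of `R` is periodic with period `c` in
each of its three blocks. -/
structure IsConvPeriodic (R : ℕ → ℕ → Prop) (N c : ℕ) : Prop where
  diag : ∀ m n, N ≤ m → N ≤ n → (R m n ↔ R (m + c) (n + c))
  right : ∀ m n, m + N ≤ n → (R m n ↔ R m (n + c))
  left : ∀ m n, n + N ≤ m → (R m n ↔ R (m + c) n)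

lemma IsConvPeriodic.mono {R : ℕ → ℕ → Prop} {N N' c : ℕ} (h : IsConvPeriodic R N c)
    (hN : N ≤ N') : IsConvPeriodic R N' c :=
  ⟨fun m n hm hn => h.diag m n (by omega) (by omega), fun m n hmn => h.right m n (by omega),
    fun m n hnm => h.left m n (by omega)⟩

lemma convWord_injective2 : Injective2 convWord := by
  intro m m' n n' h
  have h0 := congrArg (List.count 0) h
  have h1 := congrArg (List.count 1) h
  have h2 := congrArg (List.count 2) h
  simp +decide only [convWord, List.count_append, List.count_replicate,
    if_true, if_false] at h0 h1 h2
  omega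

lemma convWord_mem_convLang {R : ℕ → ℕ → Prop} {m n : ℕ} :
    convWord m n ∈ convLang R ↔ R m n := by
  constructor
  · rintro ⟨m', n', hR, he⟩
    obtain ⟨rfl, rfl⟩ := convWord_injective2 he
    exact hR
  · exact fun h => ⟨m, n, h, rfl⟩

lemma DFA.exists_evalFrom_replicate_add_mul {α σ : Type*} [Finite α] [Finite σ]
    (M : DFA α σ) : ∃ N c, 0 < c ∧ ∀ q a x k, N ≤ x →
      M.evalFrom q (List.replicate (x + k * c) a) = M.evalFrom q (List.replicate x a) := by
  obtain ⟨i, j, hne, heq⟩ := Finite.exists_ne_map_eq_of_infinite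
    fun n : ℕ => fun q (a : α) => M.evalFrom q (List.replicate n a)
  wlog hlt : i < j generalizing i j
  · exact this j i hne.symm heq.symm (by omega)
  have hij : ∀ q a, M.evalFrom q (List.replicate i a) = M.evalFrom q (List.replicate j a) :=
    fun q a => congrFun₂ heq q a
  refine ⟨i, j - i, by omega, fun q a x k hx => ?_⟩
  induction k with
  | zero => simp
  | succ k ih =>
    rw [← ih, add_one_mul, show x + (k * (j - i) + (j - i)) = j + (x - i + k * (j - i)) by omega,
      List.replicate_add, DFA.evalFrom_of_append, ← hij, ← DFA.evalFrom_of_append,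
      ← List.replicate_add, show i + (x - i + k * (j - i)) = x + k * (j - i) by omega]

lemma RegularRel.exists_isConvPeriodic {R : ℕ → ℕ → Prop} (hR : RegularRel R) :
    ∃ N c, 0 < c ∧ ∀ k, IsConvPeriodic R N (k * c) := by
  obtain ⟨σ, _, M, hM⟩ := hR
  have hacc : ∀ m n, R m n ↔ M.evalFrom M.start (convWord m n) ∈ M.accept := fun m n => by
    rw [← convWord_mem_convLang (R := R), ← hM]
    rfl
  obtain ⟨N, c, hc, hper⟩ := M.exists_evalFrom_replicate_add_mul
  refine ⟨N, c, hc, fun k => ⟨fun m n hm hn => ?_, fun m n hmn => ?_, fun m n hnm => ?_⟩⟩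
  · rw [hacc, hacc, convWord, convWord, Nat.add_min_add_right, Nat.add_sub_add_right,
      Nat.add_sub_add_right]
    simp only [DFA.evalFrom_of_append]
    rw [hper _ _ _ k (le_min hm hn)]
  · rw [hacc, hacc, convWord, convWord, min_eq_left (by omega), min_eq_left (by omega),
      show n + k * c - m = n - m + k * c by omega]
    simp only [DFA.evalFrom_of_append]
    rw [hper _ _ (n - m) k (by omega)]
  · rw [hacc, hacc, convWord, convWord, min_eq_right (by omega), min_eq_right (by omega),
      show m + k * c - n = m - n + k * c by omega]
    simp only [DFA.evalFrom_of_append]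
    rw [hper _ _ (m - n) k (by omega)]

end Pumping

section Presentation

variable {X : Type*} {L : Set ℕ} {φ : ℕ → X} {N c : ℕ}

def pullbackOn (L : Set ℕ) (φ : ℕ → X) (ρ : X → X → Prop) : ℕ → ℕ → Prop :=
  fun m n => m ∈ L ∧ n ∈ L ∧ ρ (φ m) (φ n)

lemma mem_iff_add_mul_mem (hE : IsConvPeriodic (pullbackOn L φ Eq) N c) {b : ℕ} (hb : N ≤ b)
    (k : ℕ) : b ∈ L ↔ b + k * c ∈ L := by
  induction k with
  | zero => simp
  | succ k ih =>
    have hdiag := hE.diag (b + k * c) (b + k * c) (by omega) (by omega)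
    simp only [pullbackOn, and_true, and_self] at hdiag
    rw [ih, hdiag, add_one_mul, add_assoc]

lemma thread_rel_iff_succ {ρ : X → X → Prop} (hE : IsConvPeriodic (pullbackOn L φ Eq) N c)
    (hρ : IsConvPeriodic (pullbackOn L φ ρ) N c) {b b' : ℕ} (hb : b ∈ L) (hbN : N ≤ b)
    (hb' : b' ∈ L) (hb'N : N ≤ b') (i j : ℕ) :
    ρ (φ (b + i * c)) (φ (b' + j * c)) ↔
      ρ (φ (b + (i + 1) * c)) (φ (b' + (j + 1) * c)) := by
  have hdiag := hρ.diag (b + i * c) (b' + j * c) (by omega) (by omega)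
  simp only [pullbackOn, add_assoc, ← add_one_mul] at hdiag
  simpa only [(mem_iff_add_mul_mem hE hbN _).mp hb, (mem_iff_add_mul_mem hE hb'N _).mp hb',
    true_and] using hdiag

lemma stablePattern_thread {ρ : X → X → Prop} (hE : IsConvPeriodic (pullbackOn L φ Eq) N c)
    (hρ : IsConvPeriodic (pullbackOn L φ ρ) N c) (hc : 0 < c) {b : ℕ} (hb : b ∈ L)
    (hbN : N ≤ b) : StablePattern ρ (fun k => φ (b + k * c)) N := by
  have hmem : ∀ k, b + k * c ∈ L := fun k => (mem_iff_add_mul_mem hE hbN k).mp hb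
  have hfar : ∀ i j, i + N ≤ j → b + i * c + N ≤ b + j * c := fun i j hij => by nlinarith
  refine ⟨thread_rel_iff_succ hE hρ hb hbN hb hbN, fun i j hij => ?_, fun i j hji => ?_⟩
  · simpa only [pullbackOn, hmem, true_and, add_assoc, ← add_one_mul] using
      hρ.right _ _ (hfar i j hij)
  · simpa only [pullbackOn, hmem, true_and, add_assoc, ← add_one_mul] using
      hρ.left _ _ (hfar j i hji)

lemma exists_mem_Ico_add_mul_eq {N c n : ℕ} (hc : 0 < c) (hn : N ≤ n) :
    ∃ b ∈ Ico N (N + c), ∃ k, b + k * c = n := by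
  have := Nat.mod_add_div' (n - N) c
  have := Nat.mod_lt (n - N) hc
  exact ⟨N + (n - N) % c, ⟨by omega, by omega⟩, (n - N) / c, by omega⟩

theorem hasBasicPartition_univ {r : X → X → Prop} [IsPreorder X r]
    (hsurj : ∀ x, ∃ n ∈ L, φ n = x) (hE : IsConvPeriodic (pullbackOn L φ Eq) N c)
    (hR : IsConvPeriodic (pullbackOn L φ r) N c) (hN : 0 < N) (hc : 0 < c) :
    HasBasicPartition r univ := by
  set t : ℕ → ℕ → X := fun b k => φ (b + k * c)
  set B := {b | b ∈ L ∧ b ∈ Ico N (N + c)}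
  have hBfin : B.Finite := (finite_Ico N (N + c)).subset fun b hb => hb.2
  have hshift : ∀ b ∈ B, ∀ b' ∈ B, ∀ i j, t b i = t b' j ↔ t b (i + 1) = t b' (j + 1) :=
    fun b hb b' hb' => thread_rel_iff_succ hE hE hb.1 hb.2.1 hb'.1 hb'.2.1
  set T := (fun b => range (t b)) '' {b ∈ B | Injective (t b)}
  have hT : HasBasicPartition r (⋃₀ T) := by
    refine .sUnion_of_laminar ((hBfin.subset (sep_subset _ _)).image _) ?_ ?_
    · rintro _ ⟨b, hb, rfl⟩ _ ⟨b', hb', rfl⟩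
      exact range_subset_or_of_not_disjoint (hshift b hb.1 b' hb'.1)
    · rintro _ ⟨b, hb, rfl⟩
      exact (stablePattern_thread hE hR hc hb.1.1 hb.1.2.1).hasBasicPartition_range
        hN hb.2
  have hrest : (⋃₀ T)ᶜ ⊆ φ '' Iio N ∪ ⋃ b ∈ {b ∈ B | ¬ Injective (t b)}, range (t b) := by
    intro x hx
    obtain ⟨n, hn, rfl⟩ := hsurj x
    rcases lt_or_ge n N with hnN | hnN
    · exact Or.inl ⟨n, hnN, rfl⟩
    obtain ⟨b, hbI, k, rfl⟩ := exists_mem_Ico_add_mul_eq hc hnN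
    have hb : b ∈ B := ⟨(mem_iff_add_mul_mem hE hbI.1 k).mpr hn, hbI⟩
    have hx' : φ (b + k * c) ∈ range (t b) := ⟨k, rfl⟩
    refine Or.inr (mem_biUnion ⟨hb, fun hinj => hx ?_⟩ hx')
    exact ⟨_, ⟨b, ⟨hb, hinj⟩, rfl⟩, hx'⟩
  have hrestfin : (⋃₀ T)ᶜ.Finite := by
    refine (((finite_Iio N).image φ).union ?_).subset hrest
    exact (hBfin.subset (sep_subset _ _)).biUnion fun b hb =>
      finite_range_of_not_injective (hshift b hb.1 b hb.1) hb.2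
  rw [← union_compl_self (⋃₀ T)]
  exact hT.union (.of_finite hrestfin) disjoint_compl_right

end Presentation

theorem stmt14_general {X : Type*} (le : X → X → Prop)
    (hrefl : ∀ x, le x x) (htrans : ∀ x y z, le x y → le y z → le x z)
    (hfa : UnaryFAPresentable le) :
    ∃ (m : ℕ) (A : Fin m → Set X),
      (∀ p q : Fin m, p ≠ q → Disjoint (A p) (A q)) ∧
      (⋃ p, A p) = Set.univ ∧
      ∀ p : Fin m,
        (∃ x, A p = {x}) ∨
        ((A p).Infinite ∧ ∀ x ∈ A p, ∀ y ∈ A p, x ≠ y → ¬ le x y ∧ ¬ le y x) ∨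
        (∃ e : ℕ → X, Function.Injective e ∧ Set.range e = A p ∧
          ∀ i j : ℕ, le (e i) (e j) ↔ i ≤ j) ∨
        (∃ e : ℕ → X, Function.Injective e ∧ Set.range e = A p ∧
          ∀ i j : ℕ, le (e i) (e j) ↔ j ≤ i) ∨
        ((A p).Infinite ∧ ∀ x ∈ A p, ∀ y ∈ A p, le x y) := by
  have : IsPreorder X le := { refl := hrefl, trans := htrans }
  obtain ⟨L, -, φ, hsurj, hEreg, hRreg⟩ := hfa
  obtain ⟨N₁, c₁, hc₁, hE⟩ := hEreg.exists_isConvPeriodic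
  obtain ⟨N₂, c₂, hc₂, hR⟩ := hRreg.exists_isConvPeriodic
  have hE' : IsConvPeriodic (pullbackOn L φ Eq) (N₁ + N₂ + 1) (c₁ * c₂) := by
    rw [mul_comm]
    exact (hE c₂).mono (by omega)
  have hR' : IsConvPeriodic (pullbackOn L φ le) (N₁ + N₂ + 1) (c₁ * c₂) :=
    (hR c₁).mono (by omega)
  exact (hasBasicPartition_univ hsurj hE' hR' (by omega) (by positivity)).exists_fin

theorem stmt14 {X : Type*} [Countable X] (le : X → X → Prop)
    (hrefl : ∀ x, le x x) (htrans : ∀ x y z, le x y → le y z → le x z)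
    (hfa : UnaryFAPresentable le) :
    ∃ (m : ℕ) (A : Fin m → Set X),
      (∀ p q : Fin m, p ≠ q → Disjoint (A p) (A q)) ∧
      (⋃ p, A p) = Set.univ ∧
      ∀ p : Fin m,
        (∃ x, A p = {x}) ∨
        ((A p).Infinite ∧ ∀ x ∈ A p, ∀ y ∈ A p, x ≠ y → ¬ le x y ∧ ¬ le y x) ∨
        (∃ e : ℕ → X, Function.Injective e ∧ Set.range e = A p ∧
          ∀ i j : ℕ, le (e i) (e j) ↔ i ≤ j) ∨
        (∃ e : ℕ → X, Function.Injective e ∧ Set.range e = A p ∧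
          ∀ i j : ℕ, le (e i) (e j) ↔ j ≤ i) ∨
        ((A p).Infinite ∧ ∀ x ∈ A p, ∀ y ∈ A p, le x y) :=
  stmt14_general le hrefl htrans hfa
end
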